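/- If a finite game structure G with state set V has recurring certainty, then G has periodic certainty with an explicit bound: the bound t on the number of rounds between consecutive histories at which the grand coalition attains certainty can be taken to satisfy t ≤ 2^(|V|² + 1) + 1. -/

import Mathlib

/-- The state reached after following the word `w` (a list of (action profile, state) pairs)
starting from state `v`: the last state of `w`, or `v` if `w` is empty. -/
def endFrom {α V : Type} : V → List (α × V) → V
  | v, [] => v
  | _, p :: w => endFrom p.2 w

/-- An `n`-player game structure with imperfect information: states `V` with an initial state,
action sets `A i` for each player, a total move relation labelled by action profiles,
observation functions `obs i : V → B i` for each player, and the observation function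
`obs0 : V → B0` of the fictitious, less informed Player 0, which is a coarsening of
every player's observation. -/
structure GameStructure (n : ℕ) (V : Type) (A : Fin n → Type) (B : Fin n → Type)
    (B0 : Type) where
  init : V
  move : V → (∀ i, A i) → V → Prop
  move_total : ∀ v a, ∃ v', move v a v'
  obs : ∀ i : Fin n, V → B i
  obs0 : V → B0
  obs0_coarse : ∀ v v' : V, (∃ i, obs i v = obs i v') → obs0 v = obs0 v'

namespace GameStructure

variable {n : ℕ} {V : Type} {A : Fin n → Type} {B : Fin n → Type} {B0 : Type}

variable (G : GameStructure n V A B B0)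

/-- `G.IsHistFrom v w` holds if the word `w` describes a sequence of legal moves from `v`. -/
def IsHistFrom : V → List ((∀ i, A i) × V) → Prop
  | _, [] => True
  | v, p :: w => G.move v p.1 p.2 ∧ IsHistFrom p.2 w

/-- `w` encodes a history: a legal sequence of moves from the initial state.
The history `v₀ a₀ v₁ … a_{ℓ-1} v_ℓ` is encoded as the word `(a₀,v₁) … (a_{ℓ-1},v_ℓ)`. -/
def IsHistWord (w : List ((∀ i, A i) × V)) : Prop := G.IsHistFrom G.init w

/-- The final state of the history encoded by `w`. -/
def endState (w : List ((∀ i, A i) × V)) : V := endFrom G.init w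

/-- The sequence of Player 0's observations of the states of the history encoded by `w`
(the observation of the initial state is omitted, as it is fixed). Two histories are
`∼⁰`-indistinguishable iff their `obs0Trace`s are equal (which forces equal length). -/
def obs0Trace (w : List ((∀ i, A i) × V)) : List B0 := w.map fun p => G.obs0 p.2

/-- The grand coalition attains certainty at the history `w`: every history
`∼⁰`-indistinguishable from `w` ends at the same state. -/
def Certain (w : List ((∀ i, A i) × V)) : Prop :=
  ∀ w', G.IsHistWord w' → G.obs0Trace w' = G.obs0Trace w → G.endState w' = G.endState w

/-- A play: an infinite legal sequence of states and action profiles from the initial state. -/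
structure Play (G : GameStructure n V A B B0) where
  st : ℕ → V
  act : ℕ → ∀ i, A i
  init_eq : st 0 = G.init
  valid : ∀ k, G.move (st k) (act k) (st (k + 1))

/-- The word encoding the prefix history of length `ℓ` of the play `π`. -/
def Play.prefixWord {G : GameStructure n V A B B0} (π : G.Play) (ℓ : ℕ) :
    List ((∀ i, A i) × V) :=
  (List.range ℓ).map fun k => (π.act k, π.st (k + 1))

/-- The play `π` has recurring certainty: the grand coalition attains certainty at
infinitely many of its finite prefixes. -/
def Play.HasRecurringCertainty {G : GameStructure n V A B B0} (π : G.Play) : Prop :=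
  ∀ m : ℕ, ∃ ℓ, m ≤ ℓ ∧ G.Certain (π.prefixWord ℓ)

/-- The game structure `G` has recurring certainty: every play does. -/
def RecurringCertainty : Prop := ∀ π : G.Play, π.HasRecurringCertainty

/-- `G` has periodic certainty with bound `t`: along every play, every prefix history can be
extended by at most `t` further rounds, within the play, to a history at which the grand
coalition attains certainty. -/
def PeriodicWithBound (t : ℕ) : Prop :=
  ∀ π : G.Play, ∀ m : ℕ, ∃ ℓ, m ≤ ℓ ∧ ℓ ≤ m + t ∧ G.Certain (π.prefixWord ℓ)

/-- `G` has periodic certainty: periodic certainty with some uniform bound `t`. -/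
def PeriodicCertainty : Prop := ∃ t, G.PeriodicWithBound t

end GameStructure

/-!
Along a play, Player 0's knowledge (the set of states consistent with the observations so far)
evolves by a deterministic update from the previous knowledge and the next observation. Hence if
the pair (state, knowledge) repeats at positions `k < k + d`, the play that loops forever through
the segment `[k, k + d)` is again a play, with the same states and knowledge at corresponding
positions. Recurring certainty on that looping play yields a certain history inside the segment.
By pigeonhole on the at most `|V| · 2^|V|` pairs, such a repetition occurs in every window of
`|V| · 2^|V|` rounds, and `|V| · 2^|V| ≤ 2^(|V|² + 1)`.
-/

theorem endFrom_append_singleton {α V : Type} (v : V) (w : List (α × V)) (p : α × V) :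
    endFrom v (w ++ [p]) = p.2 := by
  induction w generalizing v with
  | nil => rfl
  | cons q w ih => exact ih q.2

/-- The play that follows the positions `0, 1, …, k + d - 1` and then jumps back to `k`
forever visits, at time `j`, position `loopIndex k d j` of the original play. -/
def loopIndex (k d : ℕ) : ℕ → ℕ
  | 0 => 0
  | j + 1 => if loopIndex k d j + 1 = k + d then k else loopIndex k d j + 1

theorem loopIndex_mem (k : ℕ) {d : ℕ} (hd : 0 < d) (j : ℕ) :
    min j k ≤ loopIndex k d j ∧ loopIndex k d j < k + d := by
  induction j with
  | zero => simp only [loopIndex]; omega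
  | succ j ih =>
    simp only [loopIndex]
    split_ifs <;> omega

theorem apply_loopIndex_succ {α : Type*} {g : ℕ → α} {k d : ℕ} (hg : g k = g (k + d)) (j : ℕ) :
    g (loopIndex k d (j + 1)) = g (loopIndex k d j + 1) := by
  simp only [loopIndex]
  split_ifs with h
  · rw [h, hg]
  · rfl

theorem exists_lt_le_add_card_map_eq {α : Type*} [Fintype α] (f : ℕ → α) (m : ℕ) :
    ∃ i j, m ≤ i ∧ i < j ∧ j ≤ m + Fintype.card α ∧ f i = f j := by
  obtain ⟨i, hi, j, hj, hne, hij⟩ :=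
    Finset.exists_ne_map_eq_of_card_lt_of_maps_to (s := Finset.Icc m (m + Fintype.card α))
      (t := Finset.univ) (by simp only [Finset.card_univ, Nat.card_Icc]; omega)
      (fun _ _ ↦ Finset.mem_coe.2 (Finset.mem_univ (f _)))
  rw [Finset.mem_Icc] at hi hj
  rcases hne.lt_or_gt with hlt | hlt
  · exact ⟨i, j, hi.1, hlt, hj.2, hij⟩
  · exact ⟨j, i, hj.1, hlt, hi.2, hij.symm⟩

theorem Nat.mul_two_pow_self_le (c : ℕ) : c * 2 ^ c ≤ 2 ^ (c ^ 2 + 1) :=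
  calc c * 2 ^ c ≤ 2 ^ c * 2 ^ c := Nat.mul_le_mul_right _ Nat.lt_two_pow_self.le
    _ = 2 ^ (c + c) := (pow_add 2 c c).symm
    _ ≤ 2 ^ (c ^ 2 + 1) := Nat.pow_le_pow_right two_pos (by nlinarith)

namespace GameStructure

variable {n : ℕ} {V : Type} {A : Fin n → Type} {B : Fin n → Type} {B0 : Type}
  (G : GameStructure n V A B B0)

theorem isHistFrom_append_singleton (v : V) (w : List ((∀ i, A i) × V)) (p : (∀ i, A i) × V) :
    G.IsHistFrom v (w ++ [p]) ↔ G.IsHistFrom v w ∧ G.move (endFrom v w) p.1 p.2 := by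
  induction w generalizing v with
  | nil => simp [IsHistFrom, endFrom]
  | cons q w ih => simp [IsHistFrom, endFrom, ih, and_assoc]

theorem isHistWord_append_singleton (w : List ((∀ i, A i) × V)) (p : (∀ i, A i) × V) :
    G.IsHistWord (w ++ [p]) ↔ G.IsHistWord w ∧ G.move (G.endState w) p.1 p.2 :=
  G.isHistFrom_append_singleton _ w p

theorem endState_append_singleton (w : List ((∀ i, A i) × V)) (p : (∀ i, A i) × V) :
    G.endState (w ++ [p]) = p.2 :=
  endFrom_append_singleton _ w p

theorem obs0Trace_append_singleton (w : List ((∀ i, A i) × V)) (p : (∀ i, A i) × V) :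
    G.obs0Trace (w ++ [p]) = G.obs0Trace w ++ [G.obs0 p.2] :=
  List.map_append ..

def knowledge (τ : List B0) : Set V :=
  {v | ∃ w, G.IsHistWord w ∧ G.obs0Trace w = τ ∧ G.endState w = v}

def knowledgeUpdate (K : Set V) (b : B0) : Set V :=
  {v' | G.obs0 v' = b ∧ ∃ v ∈ K, ∃ a, G.move v a v'}

theorem certain_iff (w : List ((∀ i, A i) × V)) :
    G.Certain w ↔ G.knowledge (G.obs0Trace w) ⊆ {G.endState w} :=
  ⟨fun hc _ ⟨w', hw', hτ, he⟩ ↦ he ▸ hc w' hw' hτ, fun hK w' hw' hτ ↦ hK ⟨w', hw', hτ, rfl⟩⟩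

theorem knowledge_append_singleton (τ : List B0) (b : B0) :
    G.knowledge (τ ++ [b]) = G.knowledgeUpdate (G.knowledge τ) b := by
  ext v'
  constructor
  · rintro ⟨w, hw, hτ, rfl⟩
    obtain rfl | ⟨w, p, rfl⟩ := w.eq_nil_or_concat'
    · simp [obs0Trace] at hτ
    rw [obs0Trace_append_singleton, List.append_singleton_inj] at hτ
    rw [isHistWord_append_singleton] at hw
    rw [endState_append_singleton]
    exact ⟨hτ.2, _, ⟨w, hw.1, hτ.1, rfl⟩, p.1, hw.2⟩
  · rintro ⟨rfl, _, ⟨w, hw, rfl, rfl⟩, a, hmove⟩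
    exact ⟨w ++ [(a, v')], (G.isHistWord_append_singleton _ _).2 ⟨hw, hmove⟩,
      G.obs0Trace_append_singleton _ _, G.endState_append_singleton _ _⟩

namespace Play

variable {G}

def knowledge (π : G.Play) (ℓ : ℕ) : Set V :=
  G.knowledge (G.obs0Trace (π.prefixWord ℓ))

theorem prefixWord_succ (π : G.Play) (ℓ : ℕ) :
    π.prefixWord (ℓ + 1) = π.prefixWord ℓ ++ [(π.act ℓ, π.st (ℓ + 1))] := by
  simp [prefixWord, List.range_succ]

theorem endState_prefixWord (π : G.Play) (ℓ : ℕ) : G.endState (π.prefixWord ℓ) = π.st ℓ := by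
  cases ℓ with
  | zero => exact π.init_eq.symm
  | succ ℓ => rw [prefixWord_succ, endState_append_singleton]

theorem knowledge_succ (π : G.Play) (ℓ : ℕ) :
    π.knowledge (ℓ + 1) = G.knowledgeUpdate (π.knowledge ℓ) (G.obs0 (π.st (ℓ + 1))) := by
  rw [knowledge, prefixWord_succ, obs0Trace_append_singleton, knowledge_append_singleton]
  rfl

theorem certain_prefixWord_iff (π : G.Play) (ℓ : ℕ) :
    G.Certain (π.prefixWord ℓ) ↔ π.knowledge ℓ ⊆ {π.st ℓ} := by
  rw [certain_iff, endState_prefixWord]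
  rfl

def reindex (π : G.Play) (f : ℕ → ℕ) (h0 : f 0 = 0)
    (hf : ∀ j, π.st (f (j + 1)) = π.st (f j + 1)) : G.Play where
  st j := π.st (f j)
  act j := π.act (f j)
  init_eq := (congrArg π.st h0).trans π.init_eq
  valid j := hf j ▸ π.valid (f j)

section reindex

variable (π : G.Play) {f : ℕ → ℕ} (h0 : f 0 = 0) (hf : ∀ j, π.st (f (j + 1)) = π.st (f j + 1))

theorem knowledge_reindex (hK : ∀ j, π.knowledge (f (j + 1)) = π.knowledge (f j + 1)) (j : ℕ) :
    (π.reindex f h0 hf).knowledge j = π.knowledge (f j) := by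
  induction j with
  | zero => rw [h0]; rfl
  | succ j ih =>
    rw [knowledge_succ, ih, hK, knowledge_succ]
    exact congrArg _ (congrArg G.obs0 (hf j))

theorem certain_reindex_iff (hK : ∀ j, π.knowledge (f (j + 1)) = π.knowledge (f j + 1))
    (j : ℕ) :
    G.Certain ((π.reindex f h0 hf).prefixWord j) ↔ G.Certain (π.prefixWord (f j)) := by
  rw [certain_prefixWord_iff, certain_prefixWord_iff, knowledge_reindex π h0 hf hK]
  rfl

end reindex

theorem exists_certain_of_repeat (hrec : G.RecurringCertainty) (π : G.Play) {k d : ℕ}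
    (hd : 0 < d) (hst : π.st k = π.st (k + d)) (hK : π.knowledge k = π.knowledge (k + d)) :
    ∃ ℓ, k ≤ ℓ ∧ ℓ < k + d ∧ G.Certain (π.prefixWord ℓ) := by
  obtain ⟨j, hkj, hcert⟩ := hrec (π.reindex (loopIndex k d) rfl (apply_loopIndex_succ hst)) k
  have hmem := loopIndex_mem k hd j
  refine ⟨loopIndex k d j, by omega, hmem.2, ?_⟩
  exact (certain_reindex_iff π rfl _ (apply_loopIndex_succ hK) j).1 hcert

end Play

theorem periodicWithBound_card_of_recurringCertainty [Fintype V] (h : G.RecurringCertainty) :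
    G.PeriodicWithBound (Fintype.card (V × Set V)) := by
  intro π m
  obtain ⟨i, j, hmi, hij, hjm, hrep⟩ :=
    exists_lt_le_add_card_map_eq (fun ℓ ↦ (π.st ℓ, π.knowledge ℓ)) m
  obtain ⟨hst, hK⟩ := Prod.ext_iff.1 hrep
  obtain ⟨ℓ, hiℓ, hℓj, hcert⟩ :=
    π.exists_certain_of_repeat h (d := j - i) (by omega) (by rwa [Nat.add_sub_cancel' hij.le])
      (by rwa [Nat.add_sub_cancel' hij.le])
  exact ⟨ℓ, by omega, by omega, hcert⟩

end GameStructure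

theorem periodicCertainty_bound_of_recurringCertainty_general
    {n : ℕ} {V : Type} {A : Fin n → Type} {B : Fin n → Type} {B0 : Type}
    [Fintype V]
    (G : GameStructure n V A B B0)
    (h : G.RecurringCertainty) :
    ∃ t : ℕ, t ≤ 2 ^ (Fintype.card V ^ 2 + 1) + 1 ∧ G.PeriodicWithBound t := by
  refine ⟨_, ?_, G.periodicWithBound_card_of_recurringCertainty h⟩
  rw [Fintype.card_prod, Fintype.card_set]
  exact (Nat.mul_two_pow_self_le _).trans (Nat.le_succ _)

/-- Explicit bound for periodic certainty: if a finite game structure has recurring certainty,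
then it has periodic certainty with a bound `t ≤ 2 ^ (|V|² + 1) + 1`. -/
theorem periodicCertainty_bound_of_recurringCertainty
    {n : ℕ} {V : Type} {A : Fin n → Type} {B : Fin n → Type} {B0 : Type}
    (hn : 1 ≤ n) [Fintype V] [∀ i, Fintype (A i)] [∀ i, Nonempty (A i)]
    [∀ i, Fintype (B i)] [Fintype B0]
    (G : GameStructure n V A B B0)
    (h : G.RecurringCertainty) :
    ∃ t : ℕ, t ≤ 2 ^ (Fintype.card V ^ 2 + 1) + 1 ∧ G.PeriodicWithBound t :=
  periodicCertainty_bound_of_recurringCertainty_general G h
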